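/- Let f be the Student-t density with location 0, scale σ > 0, and degrees of freedom ν > 0, and let φ be a centered Gaussian density with variance s² > 0. Then the convolution (f * φ)(y) = ∫ f(y - u) φ(u) du satisfies (f * φ)(y) = Θ(|y|^{-(ν+1)}) as |y| → ∞; in particular, convolving a Student-t density with a Gaussian preserves its polynomial tail rate. -/

import Mathlib

open MeasureTheory

/-- Student-t density with location `0`, scale `σ`, degrees of freedom `ν`. -/
noncomputable def studentT0 (σ ν y : ℝ) : ℝ :=
  Real.Gamma ((ν + 1) / 2) / (Real.Gamma (ν / 2) * σ * Real.sqrt (ν * Real.pi)) *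
    (1 + (y / σ) ^ 2 / ν) ^ (-((ν + 1) / 2))

/-- Centered Gaussian density with variance `s²`. -/
noncomputable def gaussianDens0 (s y : ℝ) : ℝ :=
  (Real.sqrt (2 * Real.pi * s ^ 2))⁻¹ * Real.exp (-y ^ 2 / (2 * s ^ 2))

/-! With the weight `w(x) = (1 + |x|)^{-(ν+1)}`, the Student-t density is squeezed between two
constant multiples of `w` (compare `1 + x²/(σ²ν)` with `(1 + |x|)²`). Peetre's inequality
`w(y) w(u) ≤ w(y - u) ≤ w(y) / w(u)` then bounds the convolution above and below by `w(y)` times the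
Gaussian integrals of `1/w` and of `w`, which are finite and positive since the Gaussian has moments
of all orders. Finally `w(y)` is comparable to `|y|^{-(ν+1)}` once `|y| ≥ 1`. -/

open Real

section Peetre

variable {E : Type*} [SeminormedAddCommGroup E] {p : ℝ}

lemma one_add_norm_sub_le_mul (x y : E) : 1 + ‖x - y‖ ≤ (1 + ‖x‖) * (1 + ‖y‖) := by
  nlinarith [norm_sub_le x y, mul_nonneg (norm_nonneg x) (norm_nonneg y)]

lemma one_add_norm_le_mul (x y : E) : 1 + ‖x‖ ≤ (1 + ‖x - y‖) * (1 + ‖y‖) := by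
  nlinarith [norm_le_norm_add_norm_sub' x y, mul_nonneg (norm_nonneg (x - y)) (norm_nonneg y)]

lemma one_add_norm_sub_rpow_neg_le (hp : 0 ≤ p) (x y : E) :
    (1 + ‖x - y‖) ^ (-p) ≤ (1 + ‖x‖) ^ (-p) * (1 + ‖y‖) ^ p := by
  have hy : 0 < 1 + ‖y‖ := by positivity
  have hdiv : (1 + ‖x‖) * (1 + ‖y‖)⁻¹ ≤ 1 + ‖x - y‖ := by
    rw [← div_eq_mul_inv, div_le_iff₀ hy]
    exact one_add_norm_le_mul x y
  calc (1 + ‖x - y‖) ^ (-p) ≤ ((1 + ‖x‖) * (1 + ‖y‖)⁻¹) ^ (-p) :=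
        rpow_le_rpow_of_nonpos (by positivity) hdiv (neg_nonpos.2 hp)
    _ = (1 + ‖x‖) ^ (-p) * (1 + ‖y‖) ^ p := by
        rw [mul_rpow (by positivity) (by positivity), inv_rpow hy.le, ← rpow_neg hy.le, neg_neg]

lemma rpow_neg_mul_rpow_neg_le_one_add_norm_sub (hp : 0 ≤ p) (x y : E) :
    (1 + ‖x‖) ^ (-p) * (1 + ‖y‖) ^ (-p) ≤ (1 + ‖x - y‖) ^ (-p) := by
  rw [← mul_rpow (by positivity) (by positivity)]
  exact rpow_le_rpow_of_nonpos (by positivity) (one_add_norm_sub_le_mul x y) (neg_nonpos.2 hp)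

lemma rpow_neg_one_add_le (hp : 0 ≤ p) {t : ℝ} (ht : 0 < t) : (1 + t) ^ (-p) ≤ t ^ (-p) :=
  rpow_le_rpow_of_nonpos ht (by linarith) (neg_nonpos.2 hp)

lemma two_rpow_neg_mul_le_rpow_neg_one_add (hp : 0 ≤ p) {t : ℝ} (ht : 1 ≤ t) :
    2 ^ (-p) * t ^ (-p) ≤ (1 + t) ^ (-p) := by
  rw [← mul_rpow (by norm_num) (by linarith)]
  exact rpow_le_rpow_of_nonpos (by linarith) (by linarith) (neg_nonpos.2 hp)

end Peetre

section Convolution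

variable {E : Type*} [NormedAddCommGroup E] [MeasurableSpace E] {μ : Measure E}
  {f φ : E → ℝ} {p c C : ℝ}

lemma integral_comp_sub_mul_le (hp : 0 ≤ p) (hf₀ : ∀ x, 0 ≤ f x)
    (hf : ∀ x, f x ≤ C * (1 + ‖x‖) ^ (-p)) (hφ₀ : ∀ u, 0 ≤ φ u)
    (hφ : Integrable (fun u => (1 + ‖u‖) ^ p * φ u) μ) (y : E) :
    ∫ u, f (y - u) * φ u ∂μ ≤ C * (∫ u, (1 + ‖u‖) ^ p * φ u ∂μ) * (1 + ‖y‖) ^ (-p) := by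
  have hC : 0 ≤ C := by simpa using (hf₀ 0).trans (hf 0)
  rw [mul_right_comm, ← integral_const_mul]
  refine integral_mono_of_nonneg (ae_of_all _ fun u => mul_nonneg (hf₀ _) (hφ₀ u))
    (hφ.const_mul _) (ae_of_all _ fun u => ?_)
  calc f (y - u) * φ u ≤ C * ((1 + ‖y‖) ^ (-p) * (1 + ‖u‖) ^ p) * φ u := by
        gcongr
        · exact hφ₀ u
        · exact (hf _).trans (mul_le_mul_of_nonneg_left (one_add_norm_sub_rpow_neg_le hp y u) hC)
    _ = C * (1 + ‖y‖) ^ (-p) * ((1 + ‖u‖) ^ p * φ u) := by ring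

lemma le_integral_comp_sub_mul (hp : 0 ≤ p) (hc : 0 ≤ c)
    (hf : ∀ x, c * (1 + ‖x‖) ^ (-p) ≤ f x) (hφ₀ : ∀ u, 0 ≤ φ u)
    (hφ : Integrable (fun u => (1 + ‖u‖) ^ (-p) * φ u) μ) {y : E}
    (hfφ : Integrable (fun u => f (y - u) * φ u) μ) :
    c * (∫ u, (1 + ‖u‖) ^ (-p) * φ u ∂μ) * (1 + ‖y‖) ^ (-p) ≤ ∫ u, f (y - u) * φ u ∂μ := by
  rw [mul_right_comm, ← integral_const_mul]
  refine integral_mono (hφ.const_mul _) hfφ fun u => ?_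
  calc c * (1 + ‖y‖) ^ (-p) * ((1 + ‖u‖) ^ (-p) * φ u)
      = c * ((1 + ‖y‖) ^ (-p) * (1 + ‖u‖) ^ (-p)) * φ u := by ring
    _ ≤ f (y - u) * φ u := by
        gcongr
        · exact hφ₀ u
        · exact (mul_le_mul_of_nonneg_left
            (rpow_neg_mul_rpow_neg_le_one_add_norm_sub hp y u) hc).trans (hf _)

end Convolution

lemma integrable_exp_mul_abs_mul_exp_neg_mul_sq {b : ℝ} (hb : 0 < b) (a : ℝ) :
    Integrable fun u : ℝ => exp (a * |u|) * exp (-b * u ^ 2) := by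
  refine ((integrable_exp_neg_mul_sq (half_pos hb)).const_mul (exp (a ^ 2 / (2 * b)))).mono'
    (by fun_prop) (ae_of_all _ fun u => ?_)
  rw [norm_of_nonneg (by positivity), ← exp_add, ← exp_add, exp_le_exp]
  have key : a * |u| ≤ b / 2 * u ^ 2 + a ^ 2 / (2 * b) := by
    have h : 0 ≤ (b * |u| - a) ^ 2 / (2 * b) := by positivity
    have e : (b * |u| - a) ^ 2 / (2 * b) = b / 2 * u ^ 2 + a ^ 2 / (2 * b) - a * |u| := by
      field_simp
      rw [← sq_abs u]
      ring
    linarith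
  linarith

lemma one_add_abs_rpow_le_exp (p u : ℝ) : (1 + |u|) ^ p ≤ exp (|p| * |u|) :=
  calc (1 + |u|) ^ p ≤ (1 + |u|) ^ |p| :=
        rpow_le_rpow_of_exponent_le (le_add_of_nonneg_right (abs_nonneg u)) (le_abs_self p)
    _ ≤ exp |u| ^ |p| := by gcongr; linarith [add_one_le_exp |u|]
    _ = exp (|p| * |u|) := by rw [← exp_mul, mul_comm]

section Gaussian

variable {s : ℝ}

lemma gaussianDens0_pos (hs : 0 < s) (u : ℝ) : 0 < gaussianDens0 s u := by
  unfold gaussianDens0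
  have : 0 < √(2 * π * s ^ 2) := sqrt_pos.2 (by positivity)
  positivity

lemma integrable_one_add_abs_rpow_mul_gaussianDens0 (hs : 0 < s) (p : ℝ) :
    Integrable fun u => (1 + |u|) ^ p * gaussianDens0 s u := by
  have hb : 0 < 1 / (2 * s ^ 2) := by positivity
  refine ((integrable_exp_mul_abs_mul_exp_neg_mul_sq hb |p|).const_mul
    (√(2 * π * s ^ 2))⁻¹).mono' (by unfold gaussianDens0; fun_prop) (ae_of_all _ fun u => ?_)
  rw [norm_of_nonneg (mul_nonneg (by positivity) (gaussianDens0_pos hs u).le), gaussianDens0,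
    mul_left_comm]
  gcongr
  · exact one_add_abs_rpow_le_exp p u
  · exact (by ring : -u ^ 2 / (2 * s ^ 2) = _).le

lemma integral_one_add_abs_rpow_mul_gaussianDens0_pos (hs : 0 < s) (p : ℝ) :
    0 < ∫ u, (1 + |u|) ^ p * gaussianDens0 s u := by
  rw [integral_pos_iff_support_of_nonneg
    (fun u => mul_nonneg (by positivity) (gaussianDens0_pos hs u).le)
    (integrable_one_add_abs_rpow_mul_gaussianDens0 hs p)]
  rw [Function.support_eq_univ fun u => (mul_pos (by positivity) (gaussianDens0_pos hs u)).ne']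
  simp

end Gaussian

section StudentT

variable {σ ν a q : ℝ}

lemma one_add_sq_div_le (ha : 0 < a) (x : ℝ) : 1 + x ^ 2 / a ≤ (1 + 1 / a) * (1 + |x|) ^ 2 := by
  have h1 : 1 ≤ (1 + |x|) ^ 2 := one_le_pow₀ (le_add_of_nonneg_right (abs_nonneg x))
  have h2 : x ^ 2 ≤ (1 + |x|) ^ 2 := by nlinarith [sq_abs x, abs_nonneg x]
  have h3 : x ^ 2 / a ≤ 1 / a * (1 + |x|) ^ 2 := by
    rw [one_div_mul_eq_div]; gcongr
  linarith

lemma one_add_abs_sq_le (ha : 0 < a) (x : ℝ) : (1 + |x|) ^ 2 ≤ 2 * (1 + a) * (1 + x ^ 2 / a) := by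
  have h : (1 + a) * (1 + x ^ 2 / a) = 1 + a + x ^ 2 / a + x ^ 2 := by
    field_simp
    ring
  have : 0 ≤ x ^ 2 / a := by positivity
  nlinarith [sq_nonneg (1 - |x|), sq_abs x]

lemma rpow_neg_one_add_sq_div_le (ha : 0 < a) (hq : 0 ≤ q) (x : ℝ) :
    (1 + x ^ 2 / a) ^ (-q) ≤ (2 * (1 + a)) ^ q * (1 + |x|) ^ (-(2 * q)) := by
  have hk : 0 < 2 * (1 + a) := by positivity
  calc (1 + x ^ 2 / a) ^ (-q) ≤ ((2 * (1 + a))⁻¹ * (1 + |x|) ^ 2) ^ (-q) := by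
        refine rpow_le_rpow_of_nonpos (by positivity) ?_ (neg_nonpos.2 hq)
        rw [inv_mul_le_iff₀ hk]
        exact one_add_abs_sq_le ha x
    _ = (2 * (1 + a)) ^ q * (1 + |x|) ^ (-(2 * q)) := by
        rw [mul_rpow (by positivity) (by positivity), inv_rpow hk.le, ← rpow_neg hk.le, neg_neg,
          ← rpow_natCast, ← rpow_mul (by positivity)]
        norm_num

lemma le_rpow_neg_one_add_sq_div (ha : 0 < a) (hq : 0 ≤ q) (x : ℝ) :
    (1 + 1 / a) ^ (-q) * (1 + |x|) ^ (-(2 * q)) ≤ (1 + x ^ 2 / a) ^ (-q) := by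
  calc (1 + 1 / a) ^ (-q) * (1 + |x|) ^ (-(2 * q)) = ((1 + 1 / a) * (1 + |x|) ^ 2) ^ (-q) := by
        rw [mul_rpow (by positivity) (by positivity), ← rpow_natCast, ← rpow_mul (by positivity)]
        norm_num
    _ ≤ (1 + x ^ 2 / a) ^ (-q) :=
        rpow_le_rpow_of_nonpos (by positivity) (one_add_sq_div_le ha x) (neg_nonpos.2 hq)

lemma studentT0_eq (x : ℝ) :
    studentT0 σ ν x = studentT0 σ ν 0 * (1 + x ^ 2 / (σ ^ 2 * ν)) ^ (-((ν + 1) / 2)) := by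
  simp [studentT0, div_pow, div_div]

lemma studentT0_zero_pos (hσ : 0 < σ) (hν : 0 < ν) : 0 < studentT0 σ ν 0 := by
  have : 0 < Gamma ((ν + 1) / 2) := Gamma_pos_of_pos (by positivity)
  have : 0 < Gamma (ν / 2) := Gamma_pos_of_pos (by positivity)
  have : 0 < √(ν * π) := sqrt_pos.2 (by positivity)
  simp only [studentT0]
  positivity

lemma studentT0_le_studentT0_zero (hσ : 0 < σ) (hν : 0 < ν) (x : ℝ) :
    studentT0 σ ν x ≤ studentT0 σ ν 0 := by
  rw [studentT0_eq]
  refine mul_le_of_le_one_right (studentT0_zero_pos hσ hν).le ?_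
  exact rpow_le_one_of_one_le_of_nonpos (le_add_of_nonneg_right (by positivity)) (by linarith)

lemma studentT0_nonneg (hσ : 0 < σ) (hν : 0 < ν) (x : ℝ) : 0 ≤ studentT0 σ ν x := by
  rw [studentT0_eq]
  exact mul_nonneg (studentT0_zero_pos hσ hν).le (by positivity)

lemma measurable_studentT0 : Measurable (studentT0 σ ν) := by
  unfold studentT0
  fun_prop

lemma studentT0_le (hσ : 0 < σ) (hν : 0 < ν) (x : ℝ) :
    studentT0 σ ν x ≤
      studentT0 σ ν 0 * (2 * (1 + σ ^ 2 * ν)) ^ ((ν + 1) / 2) * (1 + |x|) ^ (-(ν + 1)) := by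
  have h := rpow_neg_one_add_sq_div_le (by positivity : 0 < σ ^ 2 * ν)
    (by positivity : 0 ≤ (ν + 1) / 2) x
  rw [mul_div_cancel₀ _ two_ne_zero] at h
  rw [studentT0_eq, mul_assoc]
  exact mul_le_mul_of_nonneg_left h (studentT0_zero_pos hσ hν).le

lemma le_studentT0 (hσ : 0 < σ) (hν : 0 < ν) (x : ℝ) :
    studentT0 σ ν 0 * (1 + 1 / (σ ^ 2 * ν)) ^ (-((ν + 1) / 2)) * (1 + |x|) ^ (-(ν + 1)) ≤
      studentT0 σ ν x := by
  have h := le_rpow_neg_one_add_sq_div (by positivity : 0 < σ ^ 2 * ν)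
    (by positivity : 0 ≤ (ν + 1) / 2) x
  rw [mul_div_cancel₀ _ two_ne_zero] at h
  rw [studentT0_eq x, mul_assoc]
  exact mul_le_mul_of_nonneg_left h (studentT0_zero_pos hσ hν).le

lemma integrable_studentT0_sub_mul (hσ : 0 < σ) (hν : 0 < ν) {φ : ℝ → ℝ} (hφ : Integrable φ)
    (y : ℝ) : Integrable fun u => studentT0 σ ν (y - u) * φ u := by
  have hmeas : Measurable fun u => studentT0 σ ν (y - u) :=
    measurable_studentT0.comp (measurable_const_sub y)
  refine hφ.bdd_mul (c := studentT0 σ ν 0) hmeas.aestronglyMeasurable (ae_of_all _ fun u => ?_)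
  rw [norm_of_nonneg (studentT0_nonneg hσ hν _)]
  exact studentT0_le_studentT0_zero hσ hν _

end StudentT

theorem studentT_gaussian_convolution_tail (σ ν s : ℝ)
    (hσ : 0 < σ) (hν : 0 < ν) (hs : 0 < s) :
    ∃ c C Y₀ : ℝ, 0 < c ∧ c ≤ C ∧ 0 < Y₀ ∧
      ∀ y : ℝ, Y₀ ≤ |y| →
        c * |y| ^ (-(ν + 1)) ≤ (∫ u, studentT0 σ ν (y - u) * gaussianDens0 s u) ∧
        (∫ u, studentT0 σ ν (y - u) * gaussianDens0 s u) ≤ C * |y| ^ (-(ν + 1)) := by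
  have hp : 0 ≤ ν + 1 := by linarith
  have hK := studentT0_zero_pos hσ hν
  have hM := integral_one_add_abs_rpow_mul_gaussianDens0_pos hs (-(ν + 1))
  set c := studentT0 σ ν 0 * (1 + 1 / (σ ^ 2 * ν)) ^ (-((ν + 1) / 2)) *
    ∫ u, (1 + |u|) ^ (-(ν + 1)) * gaussianDens0 s u
  set C := studentT0 σ ν 0 * (2 * (1 + σ ^ 2 * ν)) ^ ((ν + 1) / 2) *
    ∫ u, (1 + |u|) ^ (ν + 1) * gaussianDens0 s u
  refine ⟨2 ^ (-(ν + 1)) * c, max (2 ^ (-(ν + 1)) * c) C, 1, by positivity, le_max_left _ _,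
    one_pos, fun y hy => ⟨?_, ?_⟩⟩
  · have hint := integrable_studentT0_sub_mul hσ hν
      (by simpa using integrable_one_add_abs_rpow_mul_gaussianDens0 hs 0) y
    calc 2 ^ (-(ν + 1)) * c * |y| ^ (-(ν + 1))
        = c * (2 ^ (-(ν + 1)) * |y| ^ (-(ν + 1))) := by ring
      _ ≤ c * (1 + |y|) ^ (-(ν + 1)) := by
          gcongr
          exact two_rpow_neg_mul_le_rpow_neg_one_add hp hy
      _ ≤ _ := le_integral_comp_sub_mul hp (by positivity) (le_studentT0 hσ hν)
          (fun u => (gaussianDens0_pos hs u).le)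
          (integrable_one_add_abs_rpow_mul_gaussianDens0 hs _) hint
  · calc ∫ u, studentT0 σ ν (y - u) * gaussianDens0 s u ≤ C * (1 + |y|) ^ (-(ν + 1)) :=
          integral_comp_sub_mul_le hp (studentT0_nonneg hσ hν) (studentT0_le hσ hν)
            (fun u => (gaussianDens0_pos hs u).le)
            (integrable_one_add_abs_rpow_mul_gaussianDens0 hs _) y
      _ ≤ max (2 ^ (-(ν + 1)) * c) C * |y| ^ (-(ν + 1)) :=
          mul_le_mul (le_max_right _ _) (rpow_neg_one_add_le hp (by linarith))
            (by positivity) (by positivity)
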